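/- For every integer N ≥ 2 and every x ∈ [0, N/(N+1)), the Nash-equilibrium density satisfies the first-order condition −U_*(x)^{N-1} + (N-1)(1-x)^2 f_*(x) U_*(x)^{N-2} + (1/N) V_*^{N-1} = 0. -/

import Mathlib

open Real MeasureTheory

/-- The Nash-equilibrium density of the `N`-player elimination game. -/
noncomputable def fstar (N : ℕ) (x : ℝ) : ℝ :=
  if x ≤ (N:ℝ)/((N:ℝ)+1) then
    (N:ℝ) ^ (-(2:ℝ)/((N:ℝ)-1)) /
      ((1-x) ^ ((3:ℝ) - ((N:ℝ)-2)/((N:ℝ)-1)) * ((N:ℝ)-x) ^ (((N:ℝ)-2)/((N:ℝ)-1)))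
  else 0

/-- `U_*(x) = ∫_0^x (1-s) f_*(s) ds + ∫_0^1 s f_*(s) ds`. -/
noncomputable def Ustar (N : ℕ) (x : ℝ) : ℝ :=
  (∫ s in (0:ℝ)..x, (1-s) * fstar N s) + ∫ s in (0:ℝ)..1, s * fstar N s

/-- `V_* = ∫_0^1 s f_*(s) ds`. -/
noncomputable def Vstar (N : ℕ) : ℝ := ∫ s in (0:ℝ)..1, s * fstar N s

/-! With `p = 1/(N-1)` and `r(x) = (N-x)/(1-x)`, the density is
`f_*(x) = C_N r(x)^p / ((1-x)^2 (N-x))`, and since `p (N-1) = 1` one has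
`(r^p)' = r^p / ((1-x)(N-x))`. So `(1-s) f_*(s)` has primitive `C_N r^p`, and `s f_*(s)` has
primitive `C_N r^p ((N+1)s - N) / (N(1-s))`, which vanishes at `s = N/(N+1)`. Hence
`V_* = C_N N^p` and `U_* = C_N r^p`, so that `(1-x)^2 f_* = U_*/(N-x)`, `U_*^{N-1} = r/N^2` and
`V_*^{N-1} = 1/N`; the condition becomes `-r + (N-1) r/(N-x) + 1 = 0`, an identity. -/

section RatioRpow

variable {M p a b : ℝ}

lemma hasDerivAt_ratio_rpow {s : ℝ} (hs : s < 1) (hsM : s < M) :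
    HasDerivAt (fun t => ((M - t) / (1 - t)) ^ p)
      (p * (M - 1) * (((M - s) / (1 - s)) ^ p / ((1 - s) * (M - s)))) s := by
  have h1 : 0 < 1 - s := by linarith
  have hr : 0 < (M - s) / (1 - s) := div_pos (by linarith) h1
  have hratio : HasDerivAt (fun t => (M - t) / (1 - t)) ((M - 1) / (1 - s) ^ 2) s := by
    refine (((hasDerivAt_id s).const_sub M).div ((hasDerivAt_id s).const_sub 1)
      h1.ne').congr_deriv ?_
    simp only [id_eq]
    ring
  refine (hratio.rpow_const (p := p) (Or.inl hr.ne')).congr_deriv ?_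
  rw [rpow_sub_one hr.ne']
  field_simp

lemma hasDerivAt_ratio_rpow_mul (hp : p * (M - 1) = 1) (hM : M ≠ 0) {s : ℝ} (hs : s < 1)
    (hsM : s < M) :
    HasDerivAt (fun t => ((M - t) / (1 - t)) ^ p * (((M + 1) * t - M) / (M * (1 - t))))
      (s * (((M - s) / (1 - s)) ^ p / ((1 - s) ^ 2 * (M - s)))) s := by
  have h1 : 0 < 1 - s := by linarith
  have hMs : M - s ≠ 0 := (sub_pos.2 hsM).ne'
  have hfactor : HasDerivAt (fun t => ((M + 1) * t - M) / (M * (1 - t)))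
      (1 / (M * (1 - s) ^ 2)) s := by
    refine ((((hasDerivAt_id s).const_mul (M + 1)).sub_const M).div
      (((hasDerivAt_id s).const_sub 1).const_mul M) (mul_ne_zero hM h1.ne')).congr_deriv ?_
    simp only [id_eq]
    field_simp
    ring
  refine ((hasDerivAt_ratio_rpow hs hsM).mul hfactor).congr_deriv ?_
  rw [hp]
  generalize ((M - s) / (1 - s)) ^ p = R
  field_simp
  ring

lemma continuousOn_ratio_rpow_div (hM : 1 ≤ M) :
    ContinuousOn (fun s => ((M - s) / (1 - s)) ^ p / ((1 - s) ^ 2 * (M - s))) (Set.Iio 1) := by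
  intro s hs
  have h1 : 1 - s ≠ 0 := (sub_pos.2 hs).ne'
  have hM' : M - s ≠ 0 := (sub_pos.2 (lt_of_lt_of_le hs hM)).ne'
  exact ContinuousAt.continuousWithinAt (by fun_prop (disch := simp [*]))

lemma uIcc_subset_Iio {c : ℝ} (ha : a < c) (hb : b < c) : Set.uIcc a b ⊆ Set.Iio c :=
  fun _ hs => lt_of_le_of_lt hs.2 (max_lt ha hb)

lemma integral_one_sub_mul_ratio_rpow_div (hp : p * (M - 1) = 1) (hM : 1 ≤ M) (ha : a < 1)
    (hb : b < 1) :
    ∫ s in a..b, (1 - s) * (((M - s) / (1 - s)) ^ p / ((1 - s) ^ 2 * (M - s)))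
      = ((M - b) / (1 - b)) ^ p - ((M - a) / (1 - a)) ^ p := by
  have hsub := uIcc_subset_Iio ha hb
  refine intervalIntegral.integral_eq_sub_of_hasDerivAt
    (f := fun t => ((M - t) / (1 - t)) ^ p) (fun s hs => ?_) ?_
  · have hs1 : s < 1 := hsub hs
    have h1 : 1 - s ≠ 0 := (sub_pos.2 hs1).ne'
    refine (hasDerivAt_ratio_rpow hs1 (by linarith)).congr_deriv ?_
    rw [hp]
    field_simp
  · exact (((continuous_const.sub continuous_id).continuousOn).mul
      ((continuousOn_ratio_rpow_div hM).mono hsub)).intervalIntegrable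

lemma integral_mul_ratio_rpow_div (hp : p * (M - 1) = 1) (hM : 1 ≤ M) (ha : a < 1)
    (hb : b < 1) :
    ∫ s in a..b, s * (((M - s) / (1 - s)) ^ p / ((1 - s) ^ 2 * (M - s)))
      = ((M - b) / (1 - b)) ^ p * (((M + 1) * b - M) / (M * (1 - b)))
        - ((M - a) / (1 - a)) ^ p * (((M + 1) * a - M) / (M * (1 - a))) := by
  have hsub := uIcc_subset_Iio ha hb
  refine intervalIntegral.integral_eq_sub_of_hasDerivAt
    (f := fun t => ((M - t) / (1 - t)) ^ p * (((M + 1) * t - M) / (M * (1 - t))))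
    (fun s hs => ?_) ?_
  · have hs1 : s < 1 := hsub hs
    exact hasDerivAt_ratio_rpow_mul hp (by linarith) hs1 (by linarith)
  · exact (continuousOn_id.mul
      ((continuousOn_ratio_rpow_div hM).mono hsub)).intervalIntegrable

end RatioRpow

lemma rpow_div_sub_one_pow {x : ℝ} (hx : 0 ≤ x) (a : ℝ) {n : ℕ} (hn : 2 ≤ n) :
    (x ^ (a / ((n : ℝ) - 1))) ^ (n - 1) = x ^ a := by
  have hn1 : (n : ℝ) - 1 ≠ 0 := by linarith [(Nat.ofNat_le_cast.2 hn : (2 : ℝ) ≤ n)]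
  rw [← rpow_mul_natCast hx, Nat.cast_sub (by omega), Nat.cast_one, div_mul_cancel₀ a hn1]

lemma lt_one_of_le_div_add_one {M x : ℝ} (hM : 0 ≤ M) (hx : x ≤ M / (M + 1)) : x < 1 :=
  lt_of_le_of_lt hx ((div_lt_one (by linarith)).2 (by linarith))

lemma fstar_eq_of_le {N : ℕ} (hN : 2 ≤ N) {x : ℝ} (hx : x ≤ (N : ℝ) / ((N : ℝ) + 1)) :
    fstar N x = (N : ℝ) ^ (-(2 : ℝ) / ((N : ℝ) - 1)) *
      (((N - x) / (1 - x)) ^ (1 / ((N : ℝ) - 1)) / ((1 - x) ^ 2 * (N - x))) := by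
  have hN2 := (Nat.ofNat_le_cast.2 hN : (2 : ℝ) ≤ N)
  have hx1 : 0 < 1 - x := sub_pos.2 (lt_one_of_le_div_add_one (by linarith) hx)
  have hxN : 0 < (N : ℝ) - x := by linarith
  have hN1 : (N : ℝ) - 1 ≠ 0 := by linarith
  have hexp₁ : (3 : ℝ) - ((N : ℝ) - 2) / ((N : ℝ) - 1) = 1 / ((N : ℝ) - 1) + 2 := by
    field_simp; ring
  have hexp₂ : ((N : ℝ) - 2) / ((N : ℝ) - 1) = 1 - 1 / ((N : ℝ) - 1) := by
    field_simp; ring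
  rw [fstar, if_pos hx, hexp₁, hexp₂, rpow_add hx1, rpow_two, rpow_sub hxN, rpow_one,
    div_rpow hxN.le hx1.le]
  field_simp

lemma eqOn_mul_fstar {N : ℕ} (hN : 2 ≤ N) (h : ℝ → ℝ) {x : ℝ} (hx0 : 0 ≤ x)
    (hx : x ≤ (N : ℝ) / ((N : ℝ) + 1)) :
    Set.EqOn (fun s => h s * fstar N s) (fun s => (N : ℝ) ^ (-(2 : ℝ) / ((N : ℝ) - 1)) *
      (h s * (((N - s) / (1 - s)) ^ (1 / ((N : ℝ) - 1)) / ((1 - s) ^ 2 * (N - s)))))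
      (Set.uIcc 0 x) := fun s hs => by
  rw [Set.uIcc_of_le hx0] at hs
  simp only [fstar_eq_of_le hN (hs.2.trans hx), mul_left_comm]

lemma integral_one_sub_mul_fstar {N : ℕ} (hN : 2 ≤ N) {x : ℝ} (hx0 : 0 ≤ x)
    (hx : x ≤ (N : ℝ) / ((N : ℝ) + 1)) :
    ∫ s in (0 : ℝ)..x, (1 - s) * fstar N s = (N : ℝ) ^ (-(2 : ℝ) / ((N : ℝ) - 1)) *
      (((N - x) / (1 - x)) ^ (1 / ((N : ℝ) - 1)) - (N : ℝ) ^ (1 / ((N : ℝ) - 1))) := by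
  have hN2 := (Nat.ofNat_le_cast.2 hN : (2 : ℝ) ≤ N)
  have hp : 1 / ((N : ℝ) - 1) * ((N : ℝ) - 1) = 1 := one_div_mul_cancel (by linarith)
  rw [intervalIntegral.integral_congr (eqOn_mul_fstar hN (fun s => 1 - s) hx0 hx),
    intervalIntegral.integral_const_mul,
    integral_one_sub_mul_ratio_rpow_div hp (by linarith) zero_lt_one
      (lt_one_of_le_div_add_one (by linarith) hx)]
  simp

lemma Vstar_eq {N : ℕ} (hN : 2 ≤ N) :
    Vstar N = (N : ℝ) ^ (-(2 : ℝ) / ((N : ℝ) - 1)) * (N : ℝ) ^ (1 / ((N : ℝ) - 1)) := by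
  have hN2 := (Nat.ofNat_le_cast.2 hN : (2 : ℝ) ≤ N)
  have hp : 1 / ((N : ℝ) - 1) * ((N : ℝ) - 1) = 1 := one_div_mul_cancel (by linarith)
  set a : ℝ := (N : ℝ) / ((N : ℝ) + 1) with ha
  have ha0 : 0 ≤ a := by positivity
  have ha1 : a < 1 := lt_one_of_le_div_add_one (by linarith) le_rfl
  have hhead := eqOn_mul_fstar hN (fun s => s) ha0 le_rfl
  have htail : ∀ s ∈ Set.uIoc a 1, s * fstar N s = 0 := fun s hs => by
    rw [Set.uIoc_of_le ha1.le] at hs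
    rw [fstar, if_neg (not_le.2 hs.1), mul_zero]
  have hint₁ : IntervalIntegrable (fun s => s * fstar N s) volume 0 a :=
    (continuousOn_const.mul (continuousOn_id.mul ((continuousOn_ratio_rpow_div (by linarith)).mono
      (uIcc_subset_Iio zero_lt_one ha1)))).intervalIntegrable.congr
      fun s hs => (hhead (Set.uIoc_subset_uIcc hs)).symm
  have hint₂ : IntervalIntegrable (fun s => s * fstar N s) volume a 1 :=
    intervalIntegrable_const.congr fun s hs => (htail s hs).symm
  have hroot : ((N : ℝ) + 1) * a - N = 0 := by rw [ha]; field_simp; ring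
  rw [Vstar, ← intervalIntegral.integral_add_adjacent_intervals hint₁ hint₂,
    intervalIntegral.integral_congr hhead, intervalIntegral.integral_const_mul,
    integral_mul_ratio_rpow_div hp (by linarith) zero_lt_one ha1,
    intervalIntegral.integral_congr_ae (Filter.Eventually.of_forall htail),
    intervalIntegral.integral_zero, hroot]
  simp [(show (0 : ℝ) < N by linarith).ne']

lemma Ustar_eq {N : ℕ} (hN : 2 ≤ N) {x : ℝ} (hx0 : 0 ≤ x) (hx : x ≤ (N : ℝ) / ((N : ℝ) + 1)) :
    Ustar N x = (N : ℝ) ^ (-(2 : ℝ) / ((N : ℝ) - 1)) *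
      ((N - x) / (1 - x)) ^ (1 / ((N : ℝ) - 1)) := by
  rw [Ustar, ← Vstar, integral_one_sub_mul_fstar hN hx0 hx, Vstar_eq hN]
  ring

lemma one_sub_sq_mul_fstar {N : ℕ} (hN : 2 ≤ N) {x : ℝ} (hx0 : 0 ≤ x)
    (hx : x ≤ (N : ℝ) / ((N : ℝ) + 1)) :
    (1 - x) ^ 2 * fstar N x = Ustar N x / (N - x) := by
  have hx1 : 1 - x ≠ 0 := (sub_pos.2 (lt_one_of_le_div_add_one (by positivity) hx)).ne'
  rw [fstar_eq_of_le hN hx, Ustar_eq hN hx0 hx]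
  field_simp

lemma Ustar_pow {N : ℕ} (hN : 2 ≤ N) {x : ℝ} (hx0 : 0 ≤ x) (hx : x ≤ (N : ℝ) / ((N : ℝ) + 1)) :
    Ustar N x ^ (N - 1) = (N - x) / (1 - x) / (N : ℝ) ^ 2 := by
  have hN2 := (Nat.ofNat_le_cast.2 hN : (2 : ℝ) ≤ N)
  have hx1 : 0 < 1 - x := sub_pos.2 (lt_one_of_le_div_add_one (by positivity) hx)
  rw [Ustar_eq hN hx0 hx, mul_pow, rpow_div_sub_one_pow (by positivity) _ hN,
    rpow_div_sub_one_pow (div_nonneg (by linarith) hx1.le) _ hN, rpow_one, rpow_neg (by positivity),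
    rpow_two]
  ring

lemma Vstar_pow {N : ℕ} (hN : 2 ≤ N) : Vstar N ^ (N - 1) = 1 / N := by
  have hN0 : (0 : ℝ) < N := by linarith [(Nat.ofNat_le_cast.2 hN : (2 : ℝ) ≤ N)]
  rw [Vstar_eq hN, mul_pow, rpow_div_sub_one_pow hN0.le _ hN, rpow_div_sub_one_pow hN0.le _ hN,
    rpow_one, rpow_neg hN0.le, rpow_two]
  field_simp

/-- the first-order condition: for `N ≥ 2` and `x ∈ [0, N/(N+1))`,
`-U_*(x)^{N-1} + (N-1)(1-x)² f_*(x) U_*(x)^{N-2} + (1/N) V_*^{N-1} = 0`. -/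
theorem first_order_condition (N : ℕ) (hN : 2 ≤ N)
    (x : ℝ) (hx : x ∈ Set.Ico (0:ℝ) ((N:ℝ)/((N:ℝ)+1))) :
    -(Ustar N x) ^ (N-1)
      + ((N:ℝ)-1) * (1-x)^2 * fstar N x * (Ustar N x) ^ (N-2)
      + (1/(N:ℝ)) * (Vstar N) ^ (N-1) = 0 := by
  obtain ⟨hx0, hxa⟩ := hx
  have hN2 := (Nat.ofNat_le_cast.2 hN : (2 : ℝ) ≤ N)
  have hx1 : 0 < 1 - x := sub_pos.2 (lt_one_of_le_div_add_one (by positivity) hxa.le)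
  have hUU : Ustar N x ^ (N - 1) = Ustar N x * Ustar N x ^ (N - 2) := by
    rw [← pow_succ']
    congr 1
    omega
  have hxN : (N : ℝ) - x ≠ 0 := by linarith
  calc -(Ustar N x) ^ (N-1)
      + ((N:ℝ)-1) * (1-x)^2 * fstar N x * (Ustar N x) ^ (N-2)
      + (1/(N:ℝ)) * (Vstar N) ^ (N-1)
      = Ustar N x ^ (N - 1) * (((N:ℝ)-1) / (N - x) - 1) + (1/(N:ℝ)) * (Vstar N) ^ (N-1) := by
        rw [mul_assoc ((N:ℝ)-1), one_sub_sq_mul_fstar hN hx0 hxa.le, hUU]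
        ring
    _ = 0 := by
        rw [Ustar_pow hN hx0 hxa.le, Vstar_pow hN]
        field_simp
        ring
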